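/- There exists a constant C > 0 such that for every function û of class C⁴ on a neighborhood of K̂ = [−1,1]³ and every v̂ in the reference shape space P̂ = P₂(K̂) + span{ξ₁³, ξ₂³, ξ₃³, ξ₁ξ₂ξ₃}, the functional B₄ satisfies |B₄(û, v̂)| ≤ C |û|_{H⁴(K̂)} |v̂|_{H²(K̂)}. -/

import Mathlib

open MeasureTheory

/-- Partial derivative in the first variable of a curried function on `ℝ³`. -/
noncomputable def qd1 (f : ℝ → ℝ → ℝ → ℝ) : ℝ → ℝ → ℝ → ℝ :=
  fun x y z => deriv (fun t => f t y z) x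

/-- Partial derivative in the second variable of a curried function on `ℝ³`. -/
noncomputable def qd2 (f : ℝ → ℝ → ℝ → ℝ) : ℝ → ℝ → ℝ → ℝ :=
  fun x y z => deriv (fun t => f x t z) y

/-- Partial derivative in the third variable of a curried function on `ℝ³`. -/
noncomputable def qd3 (f : ℝ → ℝ → ℝ → ℝ) : ℝ → ℝ → ℝ → ℝ :=
  fun x y z => deriv (fun t => f x y t) z

/-- Membership in the shape space `P(K) = P₂(K) + span{x₁³, x₂³, x₃³, x₁x₂x₃}` of the
three-dimensional cubic Morley element. -/
def MorleyShape3 (w : ℝ → ℝ → ℝ → ℝ) : Prop :=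
  ∃ c0 c1 c2 c3 c4 c5 c6 c7 c8 c9 c10 c11 c12 c13 : ℝ, ∀ x y z : ℝ,
    w x y z = c0 + c1 * x + c2 * y + c3 * z + c4 * x ^ 2 + c5 * y ^ 2 + c6 * z ^ 2
      + c7 * (x * y) + c8 * (x * z) + c9 * (y * z)
      + c10 * x ^ 3 + c11 * y ^ 3 + c12 * z ^ 3 + c13 * (x * y * z)

/-- The `H²` seminorm of `v` on the box `[a1,b1] × [a2,b2] × [a3,b3]`, each ordering of
mixed partial derivatives counted. -/
noncomputable def semiH2Box (v : ℝ → ℝ → ℝ → ℝ) (a1 b1 a2 b2 a3 b3 : ℝ) : ℝ :=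
  Real.sqrt (∫ x in a1..b1, ∫ y in a2..b2, ∫ z in a3..b3,
    (qd1 (qd1 v) x y z) ^ 2 + (qd2 (qd2 v) x y z) ^ 2 + (qd3 (qd3 v) x y z) ^ 2
      + 2 * (qd1 (qd2 v) x y z) ^ 2 + 2 * (qd1 (qd3 v) x y z) ^ 2
      + 2 * (qd2 (qd3 v) x y z) ^ 2)

/-- The `H⁴` seminorm of `u` on the box `[a1,b1] × [a2,b2] × [a3,b3]`, each ordering of
mixed partial derivatives counted (hence the multinomial coefficients). -/
noncomputable def semiH4Box (u : ℝ → ℝ → ℝ → ℝ) (a1 b1 a2 b2 a3 b3 : ℝ) : ℝ :=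
  Real.sqrt (∫ x in a1..b1, ∫ y in a2..b2, ∫ z in a3..b3,
    (qd1 (qd1 (qd1 (qd1 u))) x y z) ^ 2 + (qd2 (qd2 (qd2 (qd2 u))) x y z) ^ 2
      + (qd3 (qd3 (qd3 (qd3 u))) x y z) ^ 2
      + 4 * (qd1 (qd1 (qd1 (qd2 u))) x y z) ^ 2
      + 4 * (qd1 (qd1 (qd1 (qd3 u))) x y z) ^ 2
      + 4 * (qd1 (qd2 (qd2 (qd2 u))) x y z) ^ 2
      + 4 * (qd2 (qd2 (qd2 (qd3 u))) x y z) ^ 2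
      + 4 * (qd1 (qd3 (qd3 (qd3 u))) x y z) ^ 2
      + 4 * (qd2 (qd3 (qd3 (qd3 u))) x y z) ^ 2
      + 6 * (qd1 (qd1 (qd2 (qd2 u))) x y z) ^ 2
      + 6 * (qd1 (qd1 (qd3 (qd3 u))) x y z) ^ 2
      + 6 * (qd2 (qd2 (qd3 (qd3 u))) x y z) ^ 2
      + 12 * (qd1 (qd1 (qd2 (qd3 u))) x y z) ^ 2
      + 12 * (qd1 (qd2 (qd2 (qd3 u))) x y z) ^ 2
      + 12 * (qd1 (qd2 (qd3 (qd3 u))) x y z) ^ 2)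

/-- `u` is of class `C⁴` on a neighborhood of the box `[a1,b1] × [a2,b2] × [a3,b3]`. -/
def C4Near3 (u : ℝ → ℝ → ℝ → ℝ) (a1 b1 a2 b2 a3 b3 : ℝ) : Prop :=
  ∃ U : Set (ℝ × ℝ × ℝ), IsOpen U ∧
    Set.Icc a1 b1 ×ˢ (Set.Icc a2 b2 ×ˢ Set.Icc a3 b3) ⊆ U ∧
    ContDiffOn ℝ 4 (fun p : ℝ × ℝ × ℝ => u p.1 p.2.1 p.2.2) U

/-- The functional `B₄` on the reference cube `[-1,1]³`. -/
noncomputable def B4 (u v : ℝ → ℝ → ℝ → ℝ) : ℝ :=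
  (1 / 3) * (∫ x in (-1:ℝ)..1, ∫ y in (-1:ℝ)..1, ∫ z in (-1:ℝ)..1,
      (qd1 (qd2 (qd2 u)) x y z + qd1 (qd3 (qd3 u)) x y z) * qd1 (qd1 (qd1 v)) x y z
        + (qd1 (qd1 (qd2 u)) x y z + qd2 (qd3 (qd3 u)) x y z) * qd2 (qd2 (qd2 v)) x y z
        + (qd1 (qd1 (qd3 u)) x y z + qd2 (qd2 (qd3 u)) x y z) * qd3 (qd3 (qd3 v)) x y z)
    - (1 / 12) * (∫ x in (-1:ℝ)..1, ∫ y in (-1:ℝ)..1, ∫ z in (-1:ℝ)..1,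
      (∫ s in (-1:ℝ)..1, ∫ t in (-1:ℝ)..1,
              qd1 (qd2 (qd2 u)) 1 s t + qd1 (qd3 (qd3 u)) 1 s t)
          * qd1 (qd1 (qd1 v)) x y z
        + (∫ s in (-1:ℝ)..1, ∫ t in (-1:ℝ)..1,
              qd1 (qd1 (qd2 u)) s 1 t + qd2 (qd3 (qd3 u)) s 1 t)
          * qd2 (qd2 (qd2 v)) x y z
        + (∫ s in (-1:ℝ)..1, ∫ t in (-1:ℝ)..1,
              qd1 (qd1 (qd3 u)) s t 1 + qd2 (qd2 (qd3 u)) s t 1)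
          * qd3 (qd3 (qd3 v)) x y z)

/-!
For `v` in the Morley space, `∂ᵢ²v = αᵢ + κᵢ ξᵢ` is affine in `ξᵢ`, so `∂ᵢ³v = κᵢ` is constant and
`κᵢ² ≤ ∫ (∂ᵢ²v)² ≤ |v|²_{H²}`. Hence `B₄(u, v) = ∑ᵢ κᵢ/3 (∫_K Aᵢ - 2 ∫_{Fᵢ} Aᵢ)` with
`Aᵢ = ∑_{j ≠ i} ∂ᵢ∂ⱼ²u`. Writing `Aᵢ(ξ)` as its value on the face `ξᵢ = 1` minus the integral of
`∂ᵢAᵢ` along a segment bounds each bracket by `2 ∫_K |∂ᵢAᵢ|`, and by Schwarz's theorem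
`∂ᵢAᵢ = ∑_{j ≠ i} ∂ᵢ²∂ⱼ²u`, whose `L¹` norm is controlled by `|u|_{H⁴}` (Cauchy–Schwarz).
-/

open Set Filter

abbrev uncurry3 (g : ℝ → ℝ → ℝ → ℝ) (p : ℝ × ℝ × ℝ) : ℝ := g p.1 p.2.1 p.2.2

abbrev cube (a b : ℝ) : Set (ℝ × ℝ × ℝ) := Icc a b ×ˢ Icc a b ×ˢ Icc a b

section PartialDerivatives

variable {g h : ℝ → ℝ → ℝ → ℝ} {U : Set (ℝ × ℝ × ℝ)} {n : ℕ} {x y z : ℝ}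

theorem DifferentiableAt.hasDerivAt_line₁ (hg : DifferentiableAt ℝ (uncurry3 g) (x, y, z)) :
    HasDerivAt (fun t => g t y z) (fderiv ℝ (uncurry3 g) (x, y, z) (1, 0, 0)) x :=
  HasFDerivAt.comp_hasDerivAt (l := uncurry3 g) x hg.hasFDerivAt
    ((hasDerivAt_id x).prodMk ((hasDerivAt_const x y).prodMk (hasDerivAt_const x z)))

theorem DifferentiableAt.hasDerivAt_line₂ (hg : DifferentiableAt ℝ (uncurry3 g) (x, y, z)) :
    HasDerivAt (fun t => g x t z) (fderiv ℝ (uncurry3 g) (x, y, z) (0, 1, 0)) y :=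
  HasFDerivAt.comp_hasDerivAt (l := uncurry3 g) y hg.hasFDerivAt
    ((hasDerivAt_const y x).prodMk ((hasDerivAt_id y).prodMk (hasDerivAt_const y z)))

theorem DifferentiableAt.hasDerivAt_line₃ (hg : DifferentiableAt ℝ (uncurry3 g) (x, y, z)) :
    HasDerivAt (fun t => g x y t) (fderiv ℝ (uncurry3 g) (x, y, z) (0, 0, 1)) z :=
  HasFDerivAt.comp_hasDerivAt (l := uncurry3 g) z hg.hasFDerivAt
    ((hasDerivAt_const z x).prodMk ((hasDerivAt_const z y).prodMk (hasDerivAt_id z)))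

theorem DifferentiableOn.uncurry3_qd1_eqOn (hg : DifferentiableOn ℝ (uncurry3 g) U)
    (hU : IsOpen U) : EqOn (uncurry3 (qd1 g)) (fun p => fderiv ℝ (uncurry3 g) p (1, 0, 0)) U :=
  fun _ hp => (hg.differentiableAt (hU.mem_nhds hp)).hasDerivAt_line₁.deriv

theorem DifferentiableOn.uncurry3_qd2_eqOn (hg : DifferentiableOn ℝ (uncurry3 g) U)
    (hU : IsOpen U) : EqOn (uncurry3 (qd2 g)) (fun p => fderiv ℝ (uncurry3 g) p (0, 1, 0)) U :=
  fun _ hp => (hg.differentiableAt (hU.mem_nhds hp)).hasDerivAt_line₂.deriv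

theorem DifferentiableOn.uncurry3_qd3_eqOn (hg : DifferentiableOn ℝ (uncurry3 g) U)
    (hU : IsOpen U) : EqOn (uncurry3 (qd3 g)) (fun p => fderiv ℝ (uncurry3 g) p (0, 0, 1)) U :=
  fun _ hp => (hg.differentiableAt (hU.mem_nhds hp)).hasDerivAt_line₃.deriv

theorem ContDiffOn.fderiv_apply_of_succ {E : Type*} [NormedAddCommGroup E] [NormedSpace ℝ E]
    {f : E → ℝ} {s : Set E} (hf : ContDiffOn ℝ (n + 1 : ℕ) f s) (hs : IsOpen s) (v : E) :
    ContDiffOn ℝ n (fun p => fderiv ℝ f p v) s :=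
  (hf.fderiv_of_isOpen hs (by push_cast; rfl)).clm_apply contDiffOn_const

theorem ContDiffOn.uncurry3_qd1 (hg : ContDiffOn ℝ (n + 1 : ℕ) (uncurry3 g) U) (hU : IsOpen U) :
    ContDiffOn ℝ n (uncurry3 (qd1 g)) U :=
  (hg.fderiv_apply_of_succ hU _).congr ((hg.differentiableOn (by simp)).uncurry3_qd1_eqOn hU)

theorem ContDiffOn.uncurry3_qd2 (hg : ContDiffOn ℝ (n + 1 : ℕ) (uncurry3 g) U) (hU : IsOpen U) :
    ContDiffOn ℝ n (uncurry3 (qd2 g)) U :=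
  (hg.fderiv_apply_of_succ hU _).congr ((hg.differentiableOn (by simp)).uncurry3_qd2_eqOn hU)

theorem ContDiffOn.uncurry3_qd3 (hg : ContDiffOn ℝ (n + 1 : ℕ) (uncurry3 g) U) (hU : IsOpen U) :
    ContDiffOn ℝ n (uncurry3 (qd3 g)) U :=
  (hg.fderiv_apply_of_succ hU _).congr ((hg.differentiableOn (by simp)).uncurry3_qd3_eqOn hU)

theorem ContDiffOn.hasDerivAt_qd1 (hg : ContDiffOn ℝ (n + 1 : ℕ) (uncurry3 g) U) (hU : IsOpen U)
    (hp : (x, y, z) ∈ U) : HasDerivAt (fun t => g t y z) (qd1 g x y z) x :=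
  ((hg.differentiableOn (by simp)).differentiableAt (hU.mem_nhds hp)).hasDerivAt_line₁
    |>.differentiableAt.hasDerivAt

theorem ContDiffOn.hasDerivAt_qd2 (hg : ContDiffOn ℝ (n + 1 : ℕ) (uncurry3 g) U) (hU : IsOpen U)
    (hp : (x, y, z) ∈ U) : HasDerivAt (fun t => g x t z) (qd2 g x y z) y :=
  ((hg.differentiableOn (by simp)).differentiableAt (hU.mem_nhds hp)).hasDerivAt_line₂
    |>.differentiableAt.hasDerivAt

theorem ContDiffOn.hasDerivAt_qd3 (hg : ContDiffOn ℝ (n + 1 : ℕ) (uncurry3 g) U) (hU : IsOpen U)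
    (hp : (x, y, z) ∈ U) : HasDerivAt (fun t => g x y t) (qd3 g x y z) z :=
  ((hg.differentiableOn (by simp)).differentiableAt (hU.mem_nhds hp)).hasDerivAt_line₃
    |>.differentiableAt.hasDerivAt

theorem fderiv_apply_comm_of_eqOn {E : Type*} [NormedAddCommGroup E] [NormedSpace ℝ E]
    {f G H : E → ℝ} {s : Set E} {p v w : E} (hf : ContDiffOn ℝ 2 f s) (hs : IsOpen s)
    (hp : p ∈ s) (hG : EqOn G (fun q => fderiv ℝ f q v) s)
    (hH : EqOn H (fun q => fderiv ℝ f q w) s) :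
    fderiv ℝ G p w = fderiv ℝ H p v := by
  have hfp : ContDiffAt ℝ 2 f p := hf.contDiffAt (hs.mem_nhds hp)
  have hd : DifferentiableAt ℝ (fderiv ℝ f) p :=
    (hfp.fderiv_right (m := 1) le_rfl).differentiableAt one_ne_zero
  rw [(hG.eventuallyEq_of_mem (hs.mem_nhds hp)).fderiv_eq,
    (hH.eventuallyEq_of_mem (hs.mem_nhds hp)).fderiv_eq,
    fderiv_clm_apply hd (differentiableAt_const v), fderiv_clm_apply hd (differentiableAt_const w)]
  simpa using hfp.isSymmSndFDerivAt (by simp) w v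

theorem ContDiffOn.qd1_qd2_eqOn (hg : ContDiffOn ℝ (2 : ℕ) (uncurry3 g) U) (hU : IsOpen U) :
    EqOn (uncurry3 (qd1 (qd2 g))) (uncurry3 (qd2 (qd1 g))) U := by
  have hg1 : DifferentiableOn ℝ (uncurry3 g) U := hg.differentiableOn (by simp)
  intro p hp
  rw [((hg.uncurry3_qd2 hU).differentiableOn (by simp)).uncurry3_qd1_eqOn hU hp,
    ((hg.uncurry3_qd1 hU).differentiableOn (by simp)).uncurry3_qd2_eqOn hU hp]
  exact fderiv_apply_comm_of_eqOn hg hU hp (hg1.uncurry3_qd2_eqOn hU) (hg1.uncurry3_qd1_eqOn hU)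

theorem ContDiffOn.qd1_qd3_eqOn (hg : ContDiffOn ℝ (2 : ℕ) (uncurry3 g) U) (hU : IsOpen U) :
    EqOn (uncurry3 (qd1 (qd3 g))) (uncurry3 (qd3 (qd1 g))) U := by
  have hg1 : DifferentiableOn ℝ (uncurry3 g) U := hg.differentiableOn (by simp)
  intro p hp
  rw [((hg.uncurry3_qd3 hU).differentiableOn (by simp)).uncurry3_qd1_eqOn hU hp,
    ((hg.uncurry3_qd1 hU).differentiableOn (by simp)).uncurry3_qd3_eqOn hU hp]
  exact fderiv_apply_comm_of_eqOn hg hU hp (hg1.uncurry3_qd3_eqOn hU) (hg1.uncurry3_qd1_eqOn hU)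

theorem ContDiffOn.qd2_qd3_eqOn (hg : ContDiffOn ℝ (2 : ℕ) (uncurry3 g) U) (hU : IsOpen U) :
    EqOn (uncurry3 (qd2 (qd3 g))) (uncurry3 (qd3 (qd2 g))) U := by
  have hg1 : DifferentiableOn ℝ (uncurry3 g) U := hg.differentiableOn (by simp)
  intro p hp
  rw [((hg.uncurry3_qd3 hU).differentiableOn (by simp)).uncurry3_qd2_eqOn hU hp,
    ((hg.uncurry3_qd2 hU).differentiableOn (by simp)).uncurry3_qd3_eqOn hU hp]
  exact fderiv_apply_comm_of_eqOn hg hU hp (hg1.uncurry3_qd3_eqOn hU) (hg1.uncurry3_qd2_eqOn hU)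

theorem Set.EqOn.uncurry3_qd1 (hgh : EqOn (uncurry3 g) (uncurry3 h) U) (hU : IsOpen U) :
    EqOn (uncurry3 (qd1 g)) (uncurry3 (qd1 h)) U := by
  rintro ⟨x, y, z⟩ hp
  refine EventuallyEq.deriv_eq ?_
  filter_upwards [(Continuous.prodMk_left (y, z)).continuousAt.preimage_mem_nhds
    (hU.mem_nhds hp)] with t ht using hgh ht

theorem Set.EqOn.uncurry3_qd2 (hgh : EqOn (uncurry3 g) (uncurry3 h) U) (hU : IsOpen U) :
    EqOn (uncurry3 (qd2 g)) (uncurry3 (qd2 h)) U := by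
  rintro ⟨x, y, z⟩ hp
  refine EventuallyEq.deriv_eq ?_
  filter_upwards [(by fun_prop : Continuous fun t : ℝ => (x, t, z)).continuousAt.preimage_mem_nhds
    (hU.mem_nhds hp)] with t ht using hgh ht

theorem ContDiffOn.qd2_qd1_qd1_eqOn (hg : ContDiffOn ℝ (3 : ℕ) (uncurry3 g) U) (hU : IsOpen U) :
    EqOn (uncurry3 (qd2 (qd1 (qd1 g)))) (uncurry3 (qd1 (qd1 (qd2 g)))) U :=
  ((hg.uncurry3_qd1 hU).qd1_qd2_eqOn hU).symm.trans
    (((hg.of_le (by norm_num)).qd1_qd2_eqOn hU).symm.uncurry3_qd1 hU)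

theorem ContDiffOn.qd3_qd1_qd1_eqOn (hg : ContDiffOn ℝ (3 : ℕ) (uncurry3 g) U) (hU : IsOpen U) :
    EqOn (uncurry3 (qd3 (qd1 (qd1 g)))) (uncurry3 (qd1 (qd1 (qd3 g)))) U :=
  ((hg.uncurry3_qd1 hU).qd1_qd3_eqOn hU).symm.trans
    (((hg.of_le (by norm_num)).qd1_qd3_eqOn hU).symm.uncurry3_qd1 hU)

theorem ContDiffOn.qd3_qd2_qd2_eqOn (hg : ContDiffOn ℝ (3 : ℕ) (uncurry3 g) U) (hU : IsOpen U) :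
    EqOn (uncurry3 (qd3 (qd2 (qd2 g)))) (uncurry3 (qd2 (qd2 (qd3 g)))) U :=
  ((hg.uncurry3_qd2 hU).qd2_qd3_eqOn hU).symm.trans
    (((hg.of_le (by norm_num)).qd2_qd3_eqOn hU).symm.uncurry3_qd2 hU)

end PartialDerivatives

theorem sq_integral_le_measureReal_mul {α : Type*} [MeasurableSpace α] {m : Measure α}
    [IsFiniteMeasure m] {f : α → ℝ} (hf : Integrable f m)
    (hf2 : Integrable (fun x => f x ^ 2) m) :
    (∫ x, f x ∂m) ^ 2 ≤ m.real univ * ∫ x, f x ^ 2 ∂m := by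
  have h := discrim_le_zero (a := m.real univ) (b := -2 * ∫ x, f x ∂m) (c := ∫ x, f x ^ 2 ∂m)
    fun t => by
      have hlin : Integrable (fun x => t ^ 2 + -2 * t * f x) m :=
        (integrable_const _).add (hf.const_mul _)
      calc 0 ≤ ∫ x, (t - f x) ^ 2 ∂m := integral_nonneg fun _ => sq_nonneg _
        _ = ∫ x, (t ^ 2 + -2 * t * f x + f x ^ 2) ∂m := by congr 1; ext; ring
        _ = _ := by
          rw [integral_add hlin hf2, integral_add (integrable_const _) (hf.const_mul _),
            integral_const, integral_const_mul, smul_eq_mul]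
          ring
  rw [discrim] at h
  linarith

section Integration

variable {a b : ℝ}

local notation "μ" => Measure.restrict (volume : Measure ℝ) (Ioc a b)
local notation "μ²" => Measure.prod μ μ
local notation "μ³" => Measure.prod μ μ²

theorem abs_intervalIntegral_sub_mul_le {g g' : ℝ → ℝ} (hab : a ≤ b)
    (hg : ContinuousOn g (Icc a b)) (hg' : ∀ t ∈ Ioo a b, HasDerivAt g (g' t) t)
    (hint : IntervalIntegrable g' volume a b) :
    |(∫ t in a..b, g t) - (b - a) * g b| ≤ (b - a) * ∫ t in a..b, |g' t| := by
  have hgi : IntervalIntegrable g volume a b := hg.intervalIntegrable_of_Icc hab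
  have hpoint (t : ℝ) (ht : t ∈ Icc a b) : |g t - g b| ≤ ∫ s in a..b, |g' s| := by
    have hsub : uIcc t b ⊆ uIcc a b := by
      rw [uIcc_of_le ht.2, uIcc_of_le hab]
      exact Icc_subset_Icc_left ht.1
    rw [abs_sub_comm, ← intervalIntegral.integral_eq_sub_of_hasDerivAt_of_le ht.2
      (hg.mono (Icc_subset_Icc_left ht.1)) (fun s hs => hg' s ⟨ht.1.trans_lt hs.1, hs.2⟩)
      (hint.mono_set hsub)]
    exact (intervalIntegral.abs_integral_le_integral_abs ht.2).trans
      (intervalIntegral.integral_mono_interval ht.1 ht.2 le_rfl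
        (Eventually.of_forall fun _ => abs_nonneg _) hint.abs)
  calc |(∫ t in a..b, g t) - (b - a) * g b| = |∫ t in a..b, (g t - g b)| := by
        rw [intervalIntegral.integral_sub hgi intervalIntegrable_const,
          intervalIntegral.integral_const, smul_eq_mul]
    _ ≤ ∫ t in a..b, |g t - g b| := intervalIntegral.abs_integral_le_integral_abs hab
    _ ≤ ∫ _ in a..b, ∫ s in a..b, |g' s| := intervalIntegral.integral_mono_on hab
        (hgi.sub intervalIntegrable_const).abs intervalIntegrable_const hpoint
    _ = (b - a) * ∫ t in a..b, |g' t| := by rw [intervalIntegral.integral_const, smul_eq_mul]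

theorem abs_integral_prod_sub_face_le {α : Type*} [MeasurableSpace α] {ν : Measure α}
    [SFinite ν] {A A' : α × ℝ → ℝ} (hab : a ≤ b) (hA : Integrable A (ν.prod μ))
    (hA' : Integrable A' (ν.prod μ)) (hface : Integrable (fun q => A (q, b)) ν)
    (hline : ∀ᵐ q ∂ν, ContinuousOn (fun t => A (q, t)) (Icc a b) ∧
      ∀ t ∈ Ioo a b, HasDerivAt (fun s => A (q, s)) (A' (q, t)) t) :
    |∫ p, A p ∂(ν.prod μ) - (b - a) * ∫ q, A (q, b) ∂ν|
      ≤ (b - a) * ∫ p, |A' p| ∂(ν.prod μ) := by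
  rw [integral_prod _ hA, integral_prod _ hA'.abs, ← integral_const_mul, ← integral_const_mul,
    ← integral_sub hA.integral_prod_left (hface.const_mul _)]
  refine abs_integral_le_integral_abs.trans (integral_mono_ae
    (hA.integral_prod_left.sub (hface.const_mul _)).abs
    (hA'.abs.integral_prod_left.const_mul _) ?_)
  filter_upwards [hline, hA'.prod_right_ae] with q ⟨hcont, hderiv⟩ hint
  simpa only [intervalIntegral.integral_of_le hab] using abs_intervalIntegral_sub_mul_le hab hcont
    hderiv ((intervalIntegrable_iff_integrableOn_Ioc_of_le hab).2 hint)

theorem integrable_prod_of_continuousOn {F : ℝ × ℝ → ℝ}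
    (hF : ContinuousOn F (Icc a b ×ˢ Icc a b)) : Integrable F μ² := by
  rw [Measure.prod_restrict, ← Measure.volume_eq_prod]
  exact (hF.integrableOn_compact (isCompact_Icc.prod isCompact_Icc)).mono_set
    (Set.prod_mono Ioc_subset_Icc_self Ioc_subset_Icc_self)

theorem integrable_prod₃_of_continuousOn {F : ℝ × ℝ × ℝ → ℝ} (hF : ContinuousOn F (cube a b)) :
    Integrable F μ³ := by
  rw [Measure.prod_restrict, Measure.prod_restrict, ← Measure.volume_eq_prod,
    ← Measure.volume_eq_prod]
  exact (hF.integrableOn_compact (isCompact_Icc.prod (isCompact_Icc.prod isCompact_Icc))).mono_set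
    (Set.prod_mono Ioc_subset_Icc_self (Set.prod_mono Ioc_subset_Icc_self Ioc_subset_Icc_self))

theorem ae_prod_mem_Icc : ∀ᵐ q ∂μ², q ∈ Icc a b ×ˢ Icc a b := by
  rw [Measure.prod_restrict, ← Measure.volume_eq_prod]
  filter_upwards [ae_restrict_mem (measurableSet_Ioc.prod measurableSet_Ioc)] with q hq
  exact Set.prod_mono Ioc_subset_Icc_self Ioc_subset_Icc_self hq

theorem ae_prod₃_mem_cube : ∀ᵐ p ∂μ³, p ∈ cube a b := by
  rw [Measure.prod_restrict, Measure.prod_restrict, ← Measure.volume_eq_prod,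
    ← Measure.volume_eq_prod]
  filter_upwards [ae_restrict_mem
    (measurableSet_Ioc.prod (measurableSet_Ioc.prod measurableSet_Ioc))] with p hp
  exact Set.prod_mono Ioc_subset_Icc_self (Set.prod_mono Ioc_subset_Icc_self Ioc_subset_Icc_self) hp

theorem measureReal_prod₃_univ (hab : a ≤ b) : μ³.real univ = (b - a) ^ 3 := by
  simp [Measure.real, ← univ_prod_univ, Measure.prod_prod, hab, ENNReal.toReal_mul, pow_three]

theorem intervalIntegral_intervalIntegral_eq_integral_prod (hab : a ≤ b) {F : ℝ → ℝ → ℝ}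
    (hF : Integrable (Function.uncurry F) μ²) :
    ∫ x in a..b, ∫ y in a..b, F x y = ∫ q, Function.uncurry F q ∂μ² := by
  simp only [intervalIntegral.integral_of_le hab]
  exact (integral_prod _ hF).symm

theorem intervalIntegral₃_eq_integral_prod (hab : a ≤ b) {F : ℝ → ℝ → ℝ → ℝ}
    (hF : Integrable (uncurry3 F) μ³) :
    ∫ x in a..b, ∫ y in a..b, ∫ z in a..b, F x y z = ∫ p, uncurry3 F p ∂μ³ := by
  simp only [intervalIntegral.integral_of_le hab]
  rw [integral_prod _ hF]
  refine integral_congr_ae ?_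
  filter_upwards [hF.prod_right_ae] with x hx
  exact (integral_prod _ hx).symm

theorem intervalIntegral₃_mono (hab : a ≤ b) {F G : ℝ → ℝ → ℝ → ℝ}
    (hF : ContinuousOn (uncurry3 F) (cube a b)) (hG : ContinuousOn (uncurry3 G) (cube a b))
    (hle : ∀ p ∈ cube a b, uncurry3 F p ≤ uncurry3 G p) :
    ∫ x in a..b, ∫ y in a..b, ∫ z in a..b, F x y z
      ≤ ∫ x in a..b, ∫ y in a..b, ∫ z in a..b, G x y z := by
  rw [intervalIntegral₃_eq_integral_prod hab (integrable_prod₃_of_continuousOn hF),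
    intervalIntegral₃_eq_integral_prod hab (integrable_prod₃_of_continuousOn hG)]
  exact integral_mono_ae (integrable_prod₃_of_continuousOn hF)
    (integrable_prod₃_of_continuousOn hG) (ae_prod₃_mem_cube.mono hle)

theorem intervalIntegral₃_add (hab : a ≤ b) {F G : ℝ → ℝ → ℝ → ℝ}
    (hF : ContinuousOn (uncurry3 F) (cube a b)) (hG : ContinuousOn (uncurry3 G) (cube a b)) :
    ∫ x in a..b, ∫ y in a..b, ∫ z in a..b, (F x y z + G x y z)
      = (∫ x in a..b, ∫ y in a..b, ∫ z in a..b, F x y z)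
        + ∫ x in a..b, ∫ y in a..b, ∫ z in a..b, G x y z := by
  rw [intervalIntegral₃_eq_integral_prod hab (F := fun x y z => F x y z + G x y z)
      (integrable_prod₃_of_continuousOn (hF.add hG)),
    intervalIntegral₃_eq_integral_prod hab (integrable_prod₃_of_continuousOn hF),
    intervalIntegral₃_eq_integral_prod hab (integrable_prod₃_of_continuousOn hG)]
  exact integral_add (integrable_prod₃_of_continuousOn hF) (integrable_prod₃_of_continuousOn hG)

theorem intervalIntegral₃_abs_add_le (hab : a ≤ b) {F G : ℝ → ℝ → ℝ → ℝ}
    (hF : ContinuousOn (uncurry3 F) (cube a b)) (hG : ContinuousOn (uncurry3 G) (cube a b)) :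
    ∫ x in a..b, ∫ y in a..b, ∫ z in a..b, |F x y z + G x y z|
      ≤ (∫ x in a..b, ∫ y in a..b, ∫ z in a..b, |F x y z|)
        + ∫ x in a..b, ∫ y in a..b, ∫ z in a..b, |G x y z| :=
  (intervalIntegral₃_mono hab (hF.add hG).abs (hF.abs.add hG.abs) fun _ _ => abs_add_le _ _)
    |>.trans_eq (intervalIntegral₃_add hab hF.abs hG.abs)

theorem sq_intervalIntegral₃_abs_le (hab : a ≤ b) {f R : ℝ → ℝ → ℝ → ℝ} {c : ℝ} (hc : 0 < c)
    (hf : ContinuousOn (uncurry3 f) (cube a b)) (hR : ContinuousOn (uncurry3 R) (cube a b))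
    (hle : ∀ p ∈ cube a b, c * uncurry3 f p ^ 2 ≤ uncurry3 R p) :
    (∫ x in a..b, ∫ y in a..b, ∫ z in a..b, |f x y z|) ^ 2
      ≤ (b - a) ^ 3 / c * ∫ x in a..b, ∫ y in a..b, ∫ z in a..b, R x y z := by
  rw [intervalIntegral₃_eq_integral_prod hab (F := fun x y z => |f x y z|)
      (integrable_prod₃_of_continuousOn hf.abs),
    intervalIntegral₃_eq_integral_prod hab (integrable_prod₃_of_continuousOn hR)]
  calc (∫ p, |uncurry3 f p| ∂μ³) ^ 2 ≤ μ³.real univ * ∫ p, |uncurry3 f p| ^ 2 ∂μ³ :=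
        sq_integral_le_measureReal_mul (integrable_prod₃_of_continuousOn hf.abs)
          (integrable_prod₃_of_continuousOn (hf.abs.pow 2))
    _ ≤ (b - a) ^ 3 * ∫ p, uncurry3 R p / c ∂μ³ := by
        rw [measureReal_prod₃_univ hab]
        refine mul_le_mul_of_nonneg_left (integral_mono_ae
          (integrable_prod₃_of_continuousOn (hf.abs.pow 2))
          ((integrable_prod₃_of_continuousOn hR).div_const c)
          (ae_prod₃_mem_cube.mono fun p hp => ?_)) (pow_nonneg (sub_nonneg.2 hab) 3)
        show |uncurry3 f p| ^ 2 ≤ uncurry3 R p / c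
        rw [sq_abs, le_div_iff₀ hc, mul_comm]
        exact hle p hp
    _ = (b - a) ^ 3 / c * ∫ p, uncurry3 R p ∂μ³ := by
        rw [integral_div]
        ring

/-- `σ (q, t)` is the point of the cube whose distinguished coordinate is `t`. -/
theorem abs_integral_sub_face_le_of_measurePreserving (hab : a ≤ b)
    (σ : (ℝ × ℝ) × ℝ ≃ᵐ ℝ × ℝ × ℝ) (hσ : MeasurePreserving σ (Measure.prod μ² μ) μ³)
    (hσc : Continuous σ) (hσ_mem : ∀ q ∈ Icc a b ×ˢ Icc a b, ∀ t ∈ Icc a b, σ (q, t) ∈ cube a b)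
    {G G' : ℝ × ℝ × ℝ → ℝ} (hG : ContinuousOn G (cube a b)) (hG' : ContinuousOn G' (cube a b))
    (hderiv : ∀ q ∈ Icc a b ×ˢ Icc a b, ∀ t ∈ Ioo a b,
      HasDerivAt (fun s => G (σ (q, s))) (G' (σ (q, t))) t) :
    |∫ p, G p ∂μ³ - (b - a) * ∫ q, G (σ (q, b)) ∂μ²| ≤ (b - a) * ∫ p, |G' p| ∂μ³ := by
  have hint {H : ℝ × ℝ × ℝ → ℝ} (hH : ContinuousOn H (cube a b)) :
      Integrable (H ∘ σ) (Measure.prod μ² μ) :=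
    (hσ.integrable_comp_emb σ.measurableEmbedding).2 (integrable_prod₃_of_continuousOn hH)
  rw [← hσ.integral_comp' G, ← hσ.integral_comp' (fun p => |G' p|)]
  refine abs_integral_prod_sub_face_le (A := G ∘ σ) (A' := G' ∘ σ) hab (hint hG) (hint hG')
    (integrable_prod_of_continuousOn ?_) ?_
  · exact hG.comp (hσc.comp (continuous_id.prodMk continuous_const)).continuousOn
      fun q hq => hσ_mem q hq b ⟨hab, le_rfl⟩
  · filter_upwards [ae_prod_mem_Icc] with q hq
    exact ⟨hG.comp (hσc.comp (continuous_const.prodMk continuous_id)).continuousOn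
      fun t ht => hσ_mem q hq t ht, hderiv q hq⟩

theorem abs_intervalIntegral₃_sub_face₁_le (hab : a ≤ b) {F F' : ℝ → ℝ → ℝ → ℝ}
    (hF : ContinuousOn (uncurry3 F) (cube a b)) (hF' : ContinuousOn (uncurry3 F') (cube a b))
    (hderiv : ∀ x ∈ Ioo a b, ∀ y ∈ Icc a b, ∀ z ∈ Icc a b,
      HasDerivAt (fun t => F t y z) (F' x y z) x) :
    |(∫ x in a..b, ∫ y in a..b, ∫ z in a..b, F x y z)
        - (b - a) * ∫ y in a..b, ∫ z in a..b, F b y z|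
      ≤ (b - a) * ∫ x in a..b, ∫ y in a..b, ∫ z in a..b, |F' x y z| := by
  rw [intervalIntegral₃_eq_integral_prod hab (integrable_prod₃_of_continuousOn hF),
    intervalIntegral₃_eq_integral_prod hab (F := fun x y z => |F' x y z|)
      (integrable_prod₃_of_continuousOn hF'.abs),
    intervalIntegral_intervalIntegral_eq_integral_prod hab (F := F b)
      (integrable_prod_of_continuousOn (hF.comp (Continuous.prodMk_right b).continuousOn
        fun q hq => ⟨⟨hab, le_rfl⟩, hq⟩))]
  exact abs_integral_sub_face_le_of_measurePreserving hab MeasurableEquiv.prodComm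
    Measure.measurePreserving_swap continuous_swap (fun q hq t ht => ⟨ht, hq⟩) hF hF'
    fun q hq t ht => hderiv t ht q.1 hq.1 q.2 hq.2

theorem abs_intervalIntegral₃_sub_face₂_le (hab : a ≤ b) {F F' : ℝ → ℝ → ℝ → ℝ}
    (hF : ContinuousOn (uncurry3 F) (cube a b)) (hF' : ContinuousOn (uncurry3 F') (cube a b))
    (hderiv : ∀ x ∈ Icc a b, ∀ y ∈ Ioo a b, ∀ z ∈ Icc a b,
      HasDerivAt (fun t => F x t z) (F' x y z) y) :
    |(∫ x in a..b, ∫ y in a..b, ∫ z in a..b, F x y z)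
        - (b - a) * ∫ x in a..b, ∫ z in a..b, F x b z|
      ≤ (b - a) * ∫ x in a..b, ∫ y in a..b, ∫ z in a..b, |F' x y z| := by
  rw [intervalIntegral₃_eq_integral_prod hab (integrable_prod₃_of_continuousOn hF),
    intervalIntegral₃_eq_integral_prod hab (F := fun x y z => |F' x y z|)
      (integrable_prod₃_of_continuousOn hF'.abs),
    intervalIntegral_intervalIntegral_eq_integral_prod hab (F := fun x z => F x b z)
      (integrable_prod_of_continuousOn (hF.comp (by fun_prop : Continuous fun q : ℝ × ℝ =>
        (q.1, b, q.2)).continuousOn fun q hq => ⟨hq.1, ⟨hab, le_rfl⟩, hq.2⟩))]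
  exact abs_integral_sub_face_le_of_measurePreserving hab
    (MeasurableEquiv.prodAssoc.trans (MeasurableEquiv.prodCongr (.refl ℝ) .prodComm))
    (((MeasurePreserving.id _).prod Measure.measurePreserving_swap).comp
      (measurePreserving_prodAssoc _ _ _))
    (continuous_fst.fst.prodMk (continuous_snd.prodMk continuous_fst.snd))
    (fun q hq t ht => ⟨hq.1, ht, hq.2⟩) hF hF' fun q hq t ht => hderiv q.1 hq.1 t ht q.2 hq.2

theorem abs_intervalIntegral₃_sub_face₃_le (hab : a ≤ b) {F F' : ℝ → ℝ → ℝ → ℝ}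
    (hF : ContinuousOn (uncurry3 F) (cube a b)) (hF' : ContinuousOn (uncurry3 F') (cube a b))
    (hderiv : ∀ x ∈ Icc a b, ∀ y ∈ Icc a b, ∀ z ∈ Ioo a b,
      HasDerivAt (fun t => F x y t) (F' x y z) z) :
    |(∫ x in a..b, ∫ y in a..b, ∫ z in a..b, F x y z)
        - (b - a) * ∫ x in a..b, ∫ y in a..b, F x y b|
      ≤ (b - a) * ∫ x in a..b, ∫ y in a..b, ∫ z in a..b, |F' x y z| := by
  rw [intervalIntegral₃_eq_integral_prod hab (integrable_prod₃_of_continuousOn hF),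
    intervalIntegral₃_eq_integral_prod hab (F := fun x y z => |F' x y z|)
      (integrable_prod₃_of_continuousOn hF'.abs),
    intervalIntegral_intervalIntegral_eq_integral_prod hab (F := fun x y => F x y b)
      (integrable_prod_of_continuousOn (hF.comp (by fun_prop : Continuous fun q : ℝ × ℝ =>
        (q.1, q.2, b)).continuousOn fun q hq => ⟨hq.1, hq.2, ⟨hab, le_rfl⟩⟩))]
  exact abs_integral_sub_face_le_of_measurePreserving hab MeasurableEquiv.prodAssoc
    (measurePreserving_prodAssoc _ _ _)
    (continuous_fst.fst.prodMk (continuous_fst.snd.prodMk continuous_snd))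
    (fun q hq t ht => ⟨hq.1, hq.2, ht⟩) hF hF' fun q hq t ht => hderiv q.1 hq.1 q.2 hq.2 t ht

end Integration

theorem deriv_eq_cubic_of_eq_cubic {f : ℝ → ℝ} {c₀ c₁ c₂ c₃ : ℝ}
    (hf : ∀ t, f t = c₀ + c₁ * t + c₂ * t ^ 2 + c₃ * t ^ 3) (t : ℝ) :
    deriv f t = c₁ + (2 * c₂) * t + (3 * c₃) * t ^ 2 + 0 * t ^ 3 := by
  rw [show f = fun t => c₀ + c₁ * t + c₂ * t ^ 2 + c₃ * t ^ 3 from funext hf]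
  refine ((((hasDerivAt_id t).const_mul c₁).const_add c₀).add ((hasDerivAt_pow 2 t).const_mul c₂)
    |>.add ((hasDerivAt_pow 3 t).const_mul c₃)).deriv.trans ?_
  simp only [Nat.cast_ofNat]
  ring

theorem integral_affine_sq (α β : ℝ) :
    ∫ t in (-1 : ℝ)..1, (α + β * t) ^ 2 = 2 * α ^ 2 + 2 / 3 * β ^ 2 := by
  have h (t : ℝ) : (α + β * t) ^ 2 = α ^ 2 + 2 * α * β * t + β ^ 2 * t ^ 2 := by ring
  simp only [h]
  rw [intervalIntegral.integral_add (Continuous.intervalIntegrable (by fun_prop) _ _)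
      (Continuous.intervalIntegrable (by fun_prop) _ _),
    intervalIntegral.integral_add (Continuous.intervalIntegrable (by fun_prop) _ _)
      (Continuous.intervalIntegrable (by fun_prop) _ _), intervalIntegral.integral_const,
    intervalIntegral.integral_const_mul, intervalIntegral.integral_const_mul, integral_id,
    integral_pow]
  norm_num
  ring

section ReferenceCube

variable {u v : ℝ → ℝ → ℝ → ℝ} {U : Set (ℝ × ℝ × ℝ)}

theorem ContDiff.sqrt_intervalIntegral₃_sq_le_semiH2Box (hv : ContDiff ℝ 2 (uncurry3 v)) :
    √(∫ x in (-1 : ℝ)..1, ∫ y in (-1 : ℝ)..1, ∫ z in (-1 : ℝ)..1, qd1 (qd1 v) x y z ^ 2)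
        ≤ semiH2Box v (-1) 1 (-1) 1 (-1) 1 ∧
      √(∫ x in (-1 : ℝ)..1, ∫ y in (-1 : ℝ)..1, ∫ z in (-1 : ℝ)..1, qd2 (qd2 v) x y z ^ 2)
        ≤ semiH2Box v (-1) 1 (-1) 1 (-1) 1 ∧
      √(∫ x in (-1 : ℝ)..1, ∫ y in (-1 : ℝ)..1, ∫ z in (-1 : ℝ)..1, qd3 (qd3 v) x y z ^ 2)
        ≤ semiH2Box v (-1) 1 (-1) 1 (-1) 1 := by
  have hv2 : ContDiffOn ℝ (2 : ℕ) (uncurry3 v) univ := hv.contDiffOn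
  have c (g : ℝ → ℝ → ℝ → ℝ) (hg : ContDiffOn ℝ (0 : ℕ) (uncurry3 g) univ) :
      ContinuousOn (uncurry3 g) (cube (-1) 1) :=
    hg.continuousOn.mono (subset_univ _)
  have h11 := c _ ((hv2.uncurry3_qd1 isOpen_univ).uncurry3_qd1 isOpen_univ)
  have h22 := c _ ((hv2.uncurry3_qd2 isOpen_univ).uncurry3_qd2 isOpen_univ)
  have h33 := c _ ((hv2.uncurry3_qd3 isOpen_univ).uncurry3_qd3 isOpen_univ)
  have h12 := c _ ((hv2.uncurry3_qd2 isOpen_univ).uncurry3_qd1 isOpen_univ)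
  have h13 := c _ ((hv2.uncurry3_qd3 isOpen_univ).uncurry3_qd1 isOpen_univ)
  have h23 := c _ ((hv2.uncurry3_qd3 isOpen_univ).uncurry3_qd2 isOpen_univ)
  refine ⟨?_, ?_, ?_⟩ <;>
  · refine Real.sqrt_le_sqrt (intervalIntegral₃_mono (by norm_num) (by fun_prop) (by fun_prop)
      fun p _ => sub_nonneg.1 ?_)
    ring_nf
    positivity

theorem MorleyShape3.exists_thirdDerivs (hv : MorleyShape3 v) :
    ∃ κ₁ κ₂ κ₃ : ℝ, (∀ x y z, qd1 (qd1 (qd1 v)) x y z = κ₁) ∧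
      (∀ x y z, qd2 (qd2 (qd2 v)) x y z = κ₂) ∧ (∀ x y z, qd3 (qd3 (qd3 v)) x y z = κ₃) ∧
      |κ₁| ≤ semiH2Box v (-1) 1 (-1) 1 (-1) 1 ∧ |κ₂| ≤ semiH2Box v (-1) 1 (-1) 1 (-1) 1 ∧
      |κ₃| ≤ semiH2Box v (-1) 1 (-1) 1 (-1) 1 := by
  obtain ⟨c0, c1, c2, c3, c4, c5, c6, c7, c8, c9, c10, c11, c12, c13, hv⟩ := hv
  have hsmooth : ContDiff ℝ 2 (uncurry3 v) := by
    show ContDiff ℝ 2 fun p : ℝ × ℝ × ℝ => v p.1 p.2.1 p.2.2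
    simp only [hv]
    fun_prop
  obtain ⟨b₁, b₂, b₃⟩ := hsmooth.sqrt_intervalIntegral₃_sq_le_semiH2Box
  have d1 (y z : ℝ) := deriv_eq_cubic_of_eq_cubic (f := fun t => v t y z) (c₂ := c4) (c₃ := c10)
    (c₀ := c0 + c2 * y + c3 * z + c5 * y ^ 2 + c6 * z ^ 2 + c9 * (y * z) + c11 * y ^ 3
      + c12 * z ^ 3)
    (c₁ := c1 + c7 * y + c8 * z + c13 * (y * z)) fun t => by rw [hv]; ring
  have d2 (x z : ℝ) := deriv_eq_cubic_of_eq_cubic (f := fun t => v x t z) (c₂ := c5) (c₃ := c11)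
    (c₀ := c0 + c1 * x + c3 * z + c4 * x ^ 2 + c6 * z ^ 2 + c8 * (x * z) + c10 * x ^ 3
      + c12 * z ^ 3)
    (c₁ := c2 + c7 * x + c9 * z + c13 * (x * z)) fun t => by rw [hv]; ring
  have d3 (x y : ℝ) := deriv_eq_cubic_of_eq_cubic (f := fun t => v x y t) (c₂ := c6) (c₃ := c12)
    (c₀ := c0 + c1 * x + c2 * y + c4 * x ^ 2 + c5 * y ^ 2 + c7 * (x * y) + c10 * x ^ 3
      + c11 * y ^ 3)
    (c₁ := c3 + c8 * x + c9 * y + c13 * (x * y)) fun t => by rw [hv]; ring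
  have d11 (y z : ℝ) := deriv_eq_cubic_of_eq_cubic (f := fun t => qd1 v t y z) (d1 y z)
  have d22 (x z : ℝ) := deriv_eq_cubic_of_eq_cubic (f := fun t => qd2 v x t z) (d2 x z)
  have d33 (x y : ℝ) := deriv_eq_cubic_of_eq_cubic (f := fun t => qd3 v x y t) (d3 x y)
  have d111 (y z : ℝ) := deriv_eq_cubic_of_eq_cubic (f := fun t => qd1 (qd1 v) t y z) (d11 y z)
  have d222 (x z : ℝ) := deriv_eq_cubic_of_eq_cubic (f := fun t => qd2 (qd2 v) x t z) (d22 x z)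
  have d333 (x y : ℝ) := deriv_eq_cubic_of_eq_cubic (f := fun t => qd3 (qd3 v) x y t) (d33 x y)
  have e11 (x y z : ℝ) : qd1 (qd1 v) x y z = 2 * c4 + 6 * c10 * x := (d11 y z x).trans (by ring)
  have e22 (x y z : ℝ) : qd2 (qd2 v) x y z = 2 * c5 + 6 * c11 * y := (d22 x z y).trans (by ring)
  have e33 (x y z : ℝ) : qd3 (qd3 v) x y z = 2 * c6 + 6 * c12 * z := (d33 x y z).trans (by ring)
  refine ⟨6 * c10, 6 * c11, 6 * c12, fun x y z => (d111 y z x).trans (by ring),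
    fun x y z => (d222 x z y).trans (by ring), fun x y z => (d333 x y z).trans (by ring),
    (Real.abs_le_sqrt ?_).trans b₁, (Real.abs_le_sqrt ?_).trans b₂,
    (Real.abs_le_sqrt ?_).trans b₃⟩
  · simp [e11, integral_affine_sq]
    nlinarith
  · simp [e22, integral_affine_sq]
    nlinarith
  · simp [e33, integral_affine_sq]
    nlinarith

theorem ContDiffOn.intervalIntegral₃_abs_le_semiH4Box (hu : ContDiffOn ℝ (4 : ℕ) (uncurry3 u) U)
    (hU : IsOpen U) (hbox : cube (-1) 1 ⊆ U) :
    (∫ x in (-1 : ℝ)..1, ∫ y in (-1 : ℝ)..1, ∫ z in (-1 : ℝ)..1, |qd1 (qd1 (qd2 (qd2 u))) x y z|)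
        ≤ 2 * semiH4Box u (-1) 1 (-1) 1 (-1) 1 ∧
      (∫ x in (-1 : ℝ)..1, ∫ y in (-1 : ℝ)..1, ∫ z in (-1 : ℝ)..1, |qd1 (qd1 (qd3 (qd3 u))) x y z|)
        ≤ 2 * semiH4Box u (-1) 1 (-1) 1 (-1) 1 ∧
      (∫ x in (-1 : ℝ)..1, ∫ y in (-1 : ℝ)..1, ∫ z in (-1 : ℝ)..1, |qd2 (qd2 (qd3 (qd3 u))) x y z|)
        ≤ 2 * semiH4Box u (-1) 1 (-1) 1 (-1) 1 := by
  have c (g : ℝ → ℝ → ℝ → ℝ) (hg : ContDiffOn ℝ (0 : ℕ) (uncurry3 g) U) :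
      ContinuousOn (uncurry3 g) (cube (-1) 1) :=
    hg.continuousOn.mono hbox
  have h1 := hu.uncurry3_qd1 hU
  have h2 := hu.uncurry3_qd2 hU
  have h3 := hu.uncurry3_qd3 hU
  have h1111 := c _ (((h1.uncurry3_qd1 hU).uncurry3_qd1 hU).uncurry3_qd1 hU)
  have h2222 := c _ (((h2.uncurry3_qd2 hU).uncurry3_qd2 hU).uncurry3_qd2 hU)
  have h3333 := c _ (((h3.uncurry3_qd3 hU).uncurry3_qd3 hU).uncurry3_qd3 hU)
  have h1112 := c _ (((h2.uncurry3_qd1 hU).uncurry3_qd1 hU).uncurry3_qd1 hU)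
  have h1113 := c _ (((h3.uncurry3_qd1 hU).uncurry3_qd1 hU).uncurry3_qd1 hU)
  have h1222 := c _ (((h2.uncurry3_qd2 hU).uncurry3_qd2 hU).uncurry3_qd1 hU)
  have h2223 := c _ (((h3.uncurry3_qd2 hU).uncurry3_qd2 hU).uncurry3_qd2 hU)
  have h1333 := c _ (((h3.uncurry3_qd3 hU).uncurry3_qd3 hU).uncurry3_qd1 hU)
  have h2333 := c _ (((h3.uncurry3_qd3 hU).uncurry3_qd3 hU).uncurry3_qd2 hU)
  have h1122 := c _ (((h2.uncurry3_qd2 hU).uncurry3_qd1 hU).uncurry3_qd1 hU)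
  have h1133 := c _ (((h3.uncurry3_qd3 hU).uncurry3_qd1 hU).uncurry3_qd1 hU)
  have h2233 := c _ (((h3.uncurry3_qd3 hU).uncurry3_qd2 hU).uncurry3_qd2 hU)
  have h1123 := c _ (((h3.uncurry3_qd2 hU).uncurry3_qd1 hU).uncurry3_qd1 hU)
  have h1223 := c _ (((h3.uncurry3_qd2 hU).uncurry3_qd2 hU).uncurry3_qd1 hU)
  have h1233 := c _ (((h3.uncurry3_qd3 hU).uncurry3_qd2 hU).uncurry3_qd1 hU)
  set R : ℝ → ℝ → ℝ → ℝ := fun x y z =>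
    (qd1 (qd1 (qd1 (qd1 u))) x y z) ^ 2 + (qd2 (qd2 (qd2 (qd2 u))) x y z) ^ 2
      + (qd3 (qd3 (qd3 (qd3 u))) x y z) ^ 2
      + 4 * (qd1 (qd1 (qd1 (qd2 u))) x y z) ^ 2
      + 4 * (qd1 (qd1 (qd1 (qd3 u))) x y z) ^ 2
      + 4 * (qd1 (qd2 (qd2 (qd2 u))) x y z) ^ 2
      + 4 * (qd2 (qd2 (qd2 (qd3 u))) x y z) ^ 2
      + 4 * (qd1 (qd3 (qd3 (qd3 u))) x y z) ^ 2
      + 4 * (qd2 (qd3 (qd3 (qd3 u))) x y z) ^ 2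
      + 6 * (qd1 (qd1 (qd2 (qd2 u))) x y z) ^ 2
      + 6 * (qd1 (qd1 (qd3 (qd3 u))) x y z) ^ 2
      + 6 * (qd2 (qd2 (qd3 (qd3 u))) x y z) ^ 2
      + 12 * (qd1 (qd1 (qd2 (qd3 u))) x y z) ^ 2
      + 12 * (qd1 (qd2 (qd2 (qd3 u))) x y z) ^ 2
      + 12 * (qd1 (qd2 (qd3 (qd3 u))) x y z) ^ 2 with hR
  have hRc : ContinuousOn (uncurry3 R) (cube (-1) 1) := by
    rw [hR]
    fun_prop
  have bound (f : ℝ → ℝ → ℝ → ℝ) (hf : ContinuousOn (uncurry3 f) (cube (-1) 1))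
      (hle : ∀ x y z, 6 * f x y z ^ 2 ≤ R x y z) :
      ∫ x in (-1 : ℝ)..1, ∫ y in (-1 : ℝ)..1, ∫ z in (-1 : ℝ)..1, |f x y z|
        ≤ 2 * semiH4Box u (-1) 1 (-1) 1 (-1) 1 := by
    have hsq := sq_intervalIntegral₃_abs_le (by norm_num) (by norm_num : (0 : ℝ) < 6) hf hRc
      fun p _ => hle _ _ _
    norm_num at hsq
    have hR0 : 0 ≤ ∫ x in (-1 : ℝ)..1, ∫ y in (-1 : ℝ)..1, ∫ z in (-1 : ℝ)..1, R x y z := by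
      nlinarith [sq_nonneg (∫ x in (-1 : ℝ)..1, ∫ y in (-1 : ℝ)..1, ∫ z in (-1 : ℝ)..1, |f x y z|)]
    have hS := Real.sq_sqrt hR0
    have hS0 := Real.sqrt_nonneg (∫ x in (-1 : ℝ)..1, ∫ y in (-1 : ℝ)..1, ∫ z in (-1 : ℝ)..1,
      R x y z)
    show _ ≤ 2 * √(∫ x in (-1 : ℝ)..1, ∫ y in (-1 : ℝ)..1, ∫ z in (-1 : ℝ)..1, R x y z)
    nlinarith
  refine ⟨bound _ h1122 fun x y z => ?_, bound _ h1133 fun x y z => ?_,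
    bound _ h2233 fun x y z => ?_⟩ <;>
  · refine sub_nonneg.1 ?_
    rw [hR]
    ring_nf
    positivity

/- `mixedᵢ u = ∑_{j ≠ i} ∂ᵢ∂ⱼ²u`, the coefficient of `∂ᵢ³v` in `B4 u v`. -/
noncomputable def mixed₁ (u : ℝ → ℝ → ℝ → ℝ) : ℝ → ℝ → ℝ → ℝ :=
  fun x y z => qd1 (qd2 (qd2 u)) x y z + qd1 (qd3 (qd3 u)) x y z

noncomputable def mixed₂ (u : ℝ → ℝ → ℝ → ℝ) : ℝ → ℝ → ℝ → ℝ :=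
  fun x y z => qd1 (qd1 (qd2 u)) x y z + qd2 (qd3 (qd3 u)) x y z

noncomputable def mixed₃ (u : ℝ → ℝ → ℝ → ℝ) : ℝ → ℝ → ℝ → ℝ :=
  fun x y z => qd1 (qd1 (qd3 u)) x y z + qd2 (qd2 (qd3 u)) x y z

theorem ContDiffOn.abs_mixed₁_sub_face_le (hu : ContDiffOn ℝ (4 : ℕ) (uncurry3 u) U)
    (hU : IsOpen U) (hbox : cube (-1) 1 ⊆ U) :
    |(∫ x in (-1 : ℝ)..1, ∫ y in (-1 : ℝ)..1, ∫ z in (-1 : ℝ)..1, mixed₁ u x y z)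
        - 2 * ∫ s in (-1 : ℝ)..1, ∫ t in (-1 : ℝ)..1, mixed₁ u 1 s t|
      ≤ 8 * semiH4Box u (-1) 1 (-1) 1 (-1) 1 := by
  obtain ⟨b1122, b1133, -⟩ := hu.intervalIntegral₃_abs_le_semiH4Box hU hbox
  have h122 := ((hu.uncurry3_qd2 hU).uncurry3_qd2 hU).uncurry3_qd1 hU
  have h133 := ((hu.uncurry3_qd3 hU).uncurry3_qd3 hU).uncurry3_qd1 hU
  have c1122 := ((h122.uncurry3_qd1 hU).mono hbox).continuousOn
  have c1133 := ((h133.uncurry3_qd1 hU).mono hbox).continuousOn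
  have hface := abs_intervalIntegral₃_sub_face₁_le (a := -1) (b := 1) (by norm_num)
    (F := mixed₁ u)
    (F' := fun x y z => qd1 (qd1 (qd2 (qd2 u))) x y z + qd1 (qd1 (qd3 (qd3 u))) x y z)
    ((h122.continuousOn.add h133.continuousOn).mono hbox) (c1122.add c1133)
    fun x hx y hy z hz => by
      have hp : (x, y, z) ∈ U := hbox ⟨Ioo_subset_Icc_self hx, hy, hz⟩
      exact (h122.hasDerivAt_qd1 hU hp).add (h133.hasDerivAt_qd1 hU hp)
  have hsplit := intervalIntegral₃_abs_add_le (by norm_num) c1122 c1133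
  norm_num at hface
  linarith

theorem ContDiffOn.abs_mixed₂_sub_face_le (hu : ContDiffOn ℝ (4 : ℕ) (uncurry3 u) U)
    (hU : IsOpen U) (hbox : cube (-1) 1 ⊆ U) :
    |(∫ x in (-1 : ℝ)..1, ∫ y in (-1 : ℝ)..1, ∫ z in (-1 : ℝ)..1, mixed₂ u x y z)
        - 2 * ∫ s in (-1 : ℝ)..1, ∫ t in (-1 : ℝ)..1, mixed₂ u s 1 t|
      ≤ 8 * semiH4Box u (-1) 1 (-1) 1 (-1) 1 := by
  obtain ⟨b1122, -, b2233⟩ := hu.intervalIntegral₃_abs_le_semiH4Box hU hbox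
  have h2 := hu.uncurry3_qd2 hU
  have h112 := (h2.uncurry3_qd1 hU).uncurry3_qd1 hU
  have h233 := ((hu.uncurry3_qd3 hU).uncurry3_qd3 hU).uncurry3_qd2 hU
  have c1122 := ((((h2.uncurry3_qd2 hU).uncurry3_qd1 hU).uncurry3_qd1 hU).mono hbox).continuousOn
  have c2233 := ((h233.uncurry3_qd2 hU).mono hbox).continuousOn
  have hface := abs_intervalIntegral₃_sub_face₂_le (a := -1) (b := 1) (by norm_num)
    (F := mixed₂ u)
    (F' := fun x y z => qd1 (qd1 (qd2 (qd2 u))) x y z + qd2 (qd2 (qd3 (qd3 u))) x y z)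
    ((h112.continuousOn.add h233.continuousOn).mono hbox) (c1122.add c2233)
    fun x hx y hy z hz => by
      have hp : (x, y, z) ∈ U := hbox ⟨hx, Ioo_subset_Icc_self hy, hz⟩
      refine ((h112.hasDerivAt_qd2 hU hp).add (h233.hasDerivAt_qd2 hU hp)).congr_deriv ?_
      rw [show qd2 (qd1 (qd1 (qd2 u))) x y z = qd1 (qd1 (qd2 (qd2 u))) x y z from
        (h2.of_le (by norm_num)).qd2_qd1_qd1_eqOn hU hp]
  have hsplit := intervalIntegral₃_abs_add_le (by norm_num) c1122 c2233
  norm_num at hface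
  linarith

theorem ContDiffOn.abs_mixed₃_sub_face_le (hu : ContDiffOn ℝ (4 : ℕ) (uncurry3 u) U)
    (hU : IsOpen U) (hbox : cube (-1) 1 ⊆ U) :
    |(∫ x in (-1 : ℝ)..1, ∫ y in (-1 : ℝ)..1, ∫ z in (-1 : ℝ)..1, mixed₃ u x y z)
        - 2 * ∫ s in (-1 : ℝ)..1, ∫ t in (-1 : ℝ)..1, mixed₃ u s t 1|
      ≤ 8 * semiH4Box u (-1) 1 (-1) 1 (-1) 1 := by
  obtain ⟨-, b1133, b2233⟩ := hu.intervalIntegral₃_abs_le_semiH4Box hU hbox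
  have h3 := hu.uncurry3_qd3 hU
  have h113 := (h3.uncurry3_qd1 hU).uncurry3_qd1 hU
  have h223 := (h3.uncurry3_qd2 hU).uncurry3_qd2 hU
  have c1133 := ((((h3.uncurry3_qd3 hU).uncurry3_qd1 hU).uncurry3_qd1 hU).mono hbox).continuousOn
  have c2233 := ((((h3.uncurry3_qd3 hU).uncurry3_qd2 hU).uncurry3_qd2 hU).mono hbox).continuousOn
  have hface := abs_intervalIntegral₃_sub_face₃_le (a := -1) (b := 1) (by norm_num)
    (F := mixed₃ u)
    (F' := fun x y z => qd1 (qd1 (qd3 (qd3 u))) x y z + qd2 (qd2 (qd3 (qd3 u))) x y z)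
    ((h113.continuousOn.add h223.continuousOn).mono hbox) (c1133.add c2233)
    fun x hx y hy z hz => by
      have hp : (x, y, z) ∈ U := hbox ⟨hx, hy, Ioo_subset_Icc_self hz⟩
      refine ((h113.hasDerivAt_qd3 hU hp).add (h223.hasDerivAt_qd3 hU hp)).congr_deriv ?_
      rw [show qd3 (qd1 (qd1 (qd3 u))) x y z = qd1 (qd1 (qd3 (qd3 u))) x y z from
          (h3.of_le (by norm_num)).qd3_qd1_qd1_eqOn hU hp,
        show qd3 (qd2 (qd2 (qd3 u))) x y z = qd2 (qd2 (qd3 (qd3 u))) x y z from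
          (h3.of_le (by norm_num)).qd3_qd2_qd2_eqOn hU hp]
  have hsplit := intervalIntegral₃_abs_add_le (by norm_num) c1133 c2233
  norm_num at hface
  linarith

theorem B4_eq_of_thirdDerivs {κ₁ κ₂ κ₃ : ℝ} (hu : ContDiffOn ℝ (3 : ℕ) (uncurry3 u) U)
    (hU : IsOpen U) (hbox : cube (-1) 1 ⊆ U)
    (h₁ : ∀ x y z, qd1 (qd1 (qd1 v)) x y z = κ₁) (h₂ : ∀ x y z, qd2 (qd2 (qd2 v)) x y z = κ₂)
    (h₃ : ∀ x y z, qd3 (qd3 (qd3 v)) x y z = κ₃) :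
    B4 u v = κ₁ / 3 * ((∫ x in (-1 : ℝ)..1, ∫ y in (-1 : ℝ)..1, ∫ z in (-1 : ℝ)..1, mixed₁ u x y z)
        - 2 * ∫ s in (-1 : ℝ)..1, ∫ t in (-1 : ℝ)..1, mixed₁ u 1 s t)
      + κ₂ / 3 * ((∫ x in (-1 : ℝ)..1, ∫ y in (-1 : ℝ)..1, ∫ z in (-1 : ℝ)..1, mixed₂ u x y z)
        - 2 * ∫ s in (-1 : ℝ)..1, ∫ t in (-1 : ℝ)..1, mixed₂ u s 1 t)
      + κ₃ / 3 * ((∫ x in (-1 : ℝ)..1, ∫ y in (-1 : ℝ)..1, ∫ z in (-1 : ℝ)..1, mixed₃ u x y z)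
        - 2 * ∫ s in (-1 : ℝ)..1, ∫ t in (-1 : ℝ)..1, mixed₃ u s t 1) := by
  have c (g : ℝ → ℝ → ℝ → ℝ) (hg : ContDiffOn ℝ (0 : ℕ) (uncurry3 g) U) :
      ContinuousOn (uncurry3 g) (cube (-1) 1) :=
    hg.continuousOn.mono hbox
  have hu2 := hu.uncurry3_qd2 hU
  have hu3 := hu.uncurry3_qd3 hU
  have hm₁ : ContinuousOn (uncurry3 (mixed₁ u)) (cube (-1) 1) :=
    (c _ ((hu2.uncurry3_qd2 hU).uncurry3_qd1 hU)).add (c _ ((hu3.uncurry3_qd3 hU).uncurry3_qd1 hU))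
  have hm₂ : ContinuousOn (uncurry3 (mixed₂ u)) (cube (-1) 1) :=
    (c _ ((hu2.uncurry3_qd1 hU).uncurry3_qd1 hU)).add (c _ ((hu3.uncurry3_qd3 hU).uncurry3_qd2 hU))
  have hm₃ : ContinuousOn (uncurry3 (mixed₃ u)) (cube (-1) 1) :=
    (c _ ((hu3.uncurry3_qd1 hU).uncurry3_qd1 hU)).add (c _ ((hu3.uncurry3_qd2 hU).uncurry3_qd2 hU))
  have hsum := intervalIntegral₃_add (by norm_num)
    (F := fun x y z => mixed₁ u x y z * κ₁ + mixed₂ u x y z * κ₂)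
    (G := fun x y z => mixed₃ u x y z * κ₃) ((hm₁.mul_const κ₁).add (hm₂.mul_const κ₂))
    (hm₃.mul_const κ₃)
  rw [intervalIntegral₃_add (by norm_num) (F := fun x y z => mixed₁ u x y z * κ₁)
    (G := fun x y z => mixed₂ u x y z * κ₂) (hm₁.mul_const κ₁) (hm₂.mul_const κ₂)] at hsum
  simp only [mixed₁, mixed₂, mixed₃] at hsum ⊢
  unfold B4
  simp only [h₁, h₂, h₃, hsum, intervalIntegral.integral_mul_const,
    intervalIntegral.integral_const, smul_eq_mul]
  ring

end ReferenceCube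

/-- Continuity bound for the functional `B₄` on the reference cube. -/
theorem stmt_18 :
    ∃ C > (0:ℝ), ∀ u v : ℝ → ℝ → ℝ → ℝ,
      C4Near3 u (-1) 1 (-1) 1 (-1) 1 → MorleyShape3 v →
      |B4 u v| ≤ C * semiH4Box u (-1) 1 (-1) 1 (-1) 1 * semiH2Box v (-1) 1 (-1) 1 (-1) 1 := by
  refine ⟨8, by norm_num, fun u v ⟨U, hU, hbox, hu⟩ hv => ?_⟩
  replace hu : ContDiffOn ℝ (4 : ℕ) (uncurry3 u) U := hu
  obtain ⟨κ₁, κ₂, κ₃, h₁, h₂, h₃, hκ₁, hκ₂, hκ₃⟩ := hv.exists_thirdDerivs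
  rw [B4_eq_of_thirdDerivs (hu.of_le (by norm_num)) hU hbox h₁ h₂ h₃]
  have e₁ := hu.abs_mixed₁_sub_face_le hU hbox
  have e₂ := hu.abs_mixed₂_sub_face_le hU hbox
  have e₃ := hu.abs_mixed₃_sub_face_le hU hbox
  set S₂ := semiH2Box v (-1) 1 (-1) 1 (-1) 1
  set S₄ := semiH4Box u (-1) 1 (-1) 1 (-1) 1
  have hS₂ : 0 ≤ S₂ := Real.sqrt_nonneg _
  have hS₄ : 0 ≤ S₄ := Real.sqrt_nonneg _
  refine (abs_add_three _ _ _).trans ?_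
  simp only [abs_mul, abs_div, abs_of_pos (three_pos : (0 : ℝ) < 3)]
  calc _ ≤ S₂ / 3 * (8 * S₄) + S₂ / 3 * (8 * S₄) + S₂ / 3 * (8 * S₄) := by gcongr
    _ = 8 * S₄ * S₂ := by ring
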